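/- Let D be the improved digraph whose associated undirected graph F is a forest with negative trees T_1,…,T_k, let J ⊆ {1,…,k}, i ∈ J, and u,v ∈ V(T_i). If P_1 is a path from s to u in D_∅ = D − ⋃_{j=1}^{k} A(T_j), P_2 is the path from u to v inside A(T_i), and P_3 is a path from v to t in D_{J∖{i}} = D − ⋃_{j ∈ {1,…,k}∖(J∖{i})} A(T_j), then the concatenated walk P_1 + P_2 + P_3 is a special-simple walk from s to t. -/

import Mathlib

namespace NearlyConservativePaper

variable {V : Type} [Fintype V] [DecidableEq V]

/-- A weighted digraph given by adjacency and arc weights. -/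
structure WDigraph (V : Type) where
  Adj : V → V → Prop
  c : V → V → ℝ

/-- A step `(u, v, b)` of a walk: `b = false` means an original arc from `u` to `v`,
`b = true` means the added loose arc from `u` to `v`. -/
abbrev Step (V : Type) := V × V × Bool

/-- `IsWalk AS s t l`: `l` is a walk from `s` to `t` using arcs allowed by `AS`. -/
def IsWalk (AS : V → V → Bool → Prop) : V → V → List (Step V) → Prop
  | s, t, [] => s = t
  | s, t, (u, v, b) :: l => u = s ∧ AS u v b ∧ IsWalk AS v t l

/-- The list of head-vertices of the steps of a walk. -/
def heads (l : List (Step V)) : List V := l.map fun a => a.2.1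

/-- Total weight of a walk with respect to the step-weight `w`. -/
def wSum (w : V → V → Bool → ℝ) (l : List (Step V)) : ℝ :=
  (l.map fun a => w a.1 a.2.1 a.2.2).sum

/-- A directed cycle: a nonempty closed walk whose vertices are pairwise distinct. -/
def IsCycle (AS : V → V → Bool → Prop) (s : V) (l : List (Step V)) : Prop :=
  IsWalk AS s s l ∧ l ≠ [] ∧ (heads l).Nodup

/-- A directed (simple) path. -/
def IsPath (AS : V → V → Bool → Prop) (s t : V) (l : List (Step V)) : Prop :=
  IsWalk AS s t l ∧ (s :: heads l).Nodup

/-- Nearly conservative: every negative directed cycle consists of exactly two arcs. -/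
def NearlyCons (AS : V → V → Bool → Prop) (w : V → V → Bool → ℝ) : Prop :=
  ∀ s l, IsCycle AS s l → wSum w l < 0 → l.length = 2

/-- Minimum weight of a directed path from `s` to `t`, `+∞` if there is none. -/
noncomputable def distW (AS : V → V → Bool → Prop) (w : V → V → Bool → ℝ)
    (s t : V) : EReal :=
  sInf {x : EReal | ∃ l, IsPath AS s t l ∧ (wSum w l : EReal) = x}

namespace WDigraph

variable (D : WDigraph V)

/-- The arc `uv` is special if `vu` is also an arc and `c(uv) + c(vu) < 0`. -/
def Special (u v : V) : Prop := D.Adj u v ∧ D.Adj v u ∧ D.c u v + D.c v u < 0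

/-- The arcs of the original digraph `D` (only `b = false` steps). -/
def baseArcs (u v : V) (b : Bool) : Prop := b = false ∧ D.Adj u v

/-- The arcs of the improved digraph: original arcs and, for every special arc `vu`,
an added loose ordinary arc from `u` to `v`. -/
def ImpArc (u v : V) (b : Bool) : Prop := if b then D.Special v u else D.Adj u v

/-- The weight of a step of the improved digraph: the loose arc added for the
special arc `vu` has weight `-c(vu)`. -/
def impW (u v : V) (b : Bool) : ℝ := if b then -(D.c v u) else D.c u v

/-- A walk is special-simple if it contains every special arc at most once and never
contains both a special arc and its opposite. -/
def SpecialSimple (l : List (Step V)) : Prop :=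
  ∀ u v, D.Special u v → l.count (u, v, false) + l.count (v, u, false) ≤ 1

/-- The associated undirected graph `F`. -/
def F : SimpleGraph V where
  Adj u v := u ≠ v ∧ D.Special u v
  symm := by
    constructor
    rintro u v ⟨hne, h1, h2, h3⟩
    exact ⟨hne.symm, h2, h1, by linarith⟩
  loopless := by constructor; rintro u ⟨hne, -⟩; exact hne rfl

/-- The weight of a walk of `F`, each edge being traversed as the special arc pointing
in the direction of the traversal. -/
def fWeight {s t : V} (p : D.F.Walk s t) : ℝ :=
  (p.darts.map fun d => D.c d.toProd.1 d.toProd.2).sum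

/-- The improved digraph with the original (special) arcs in `Rem` removed. -/
def arcsMinus (Rem : V → V → Prop) (u v : V) (b : Bool) : Prop :=
  D.ImpArc u v b ∧ ¬ (b = false ∧ Rem u v)

end WDigraph

/-- The special arcs of the negative tree containing `t₀` (to be removed from `D`). -/
def remT (D : WDigraph V) (t₀ : V) : V → V → Prop :=
  fun x y => D.F.Adj x y ∧ D.F.Reachable t₀ x

/-- The special arcs of the negative trees `T_i` with `i ∉ J` (to be removed from `D`,
yielding `D_J`); here `t₀ i` is a base vertex of the `i`-th negative tree. -/
def remJ (D : WDigraph V) {k : ℕ} (t₀ : Fin k → V) (J : Finset (Fin k)) : V → V → Prop :=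
  fun x y => D.F.Adj x y ∧ ∃ i, i ∉ J ∧ D.F.Reachable (t₀ i) x

lemma isWalk_mono {A B : V → V → Bool → Prop} (h : ∀ x y b, A x y b → B x y b) :
    ∀ (s t : V) (l : List (Step V)), IsWalk A s t l → IsWalk B s t l := by
  intro s t l
  induction l generalizing s with
  | nil => exact id
  | cons a l ih =>
    obtain ⟨x, y, b⟩ := a
    rintro ⟨rfl, ha, hw⟩
    exact ⟨rfl, h _ _ _ ha, ih _ hw⟩

lemma isWalk_append {A : V → V → Bool → Prop} :
    ∀ {s u t : V} {l1 l2 : List (Step V)},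
      IsWalk A s u l1 → IsWalk A u t l2 → IsWalk A s t (l1 ++ l2) := by
  intro s u t l1
  induction l1 generalizing s with
  | nil => intro l2 h1 h2; cases h1; simpa using h2
  | cons a l ih =>
    obtain ⟨x, y, b⟩ := a
    rintro l2 ⟨rfl, ha, hw⟩ h2
    exact ⟨rfl, ha, ih hw h2⟩

lemma isWalk_mem {A : V → V → Bool → Prop} :
    ∀ {s t : V} {l : List (Step V)}, IsWalk A s t l → ∀ e ∈ l, A e.1 e.2.1 e.2.2 := by
  intro s t l
  induction l generalizing s with
  | nil => intro _ e he; simp at he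
  | cons a l ih =>
    obtain ⟨x, y, b⟩ := a
    rintro ⟨rfl, ha, hw⟩ e he
    rcases List.mem_cons.mp he with h | h
    · subst h; exact ha
    · exact ih hw e h

lemma count_le_count_heads (a b : V) (c : Bool) (l : List (Step V)) :
    l.count (a, b, c) ≤ (heads l).count b := by
  induction l with
  | nil => simp [heads]
  | cons e l ih =>
    obtain ⟨x, y, d⟩ := e
    rw [show heads ((x, y, d) :: l) = y :: heads l from rfl, List.count_cons, List.count_cons]
    by_cases h : ((x, y, d) : Step V) = (a, b, c)
    · have h' : x = a ∧ y = b ∧ d = c := by simpa [Prod.mk.injEq] using h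
      obtain ⟨rfl, rfl, rfl⟩ := h'
      simp only [beq_self_eq_true, if_true]
      omega
    · by_cases hy : y = b
      · have hne' : ¬ ((((x, y, d) : Step V) == (a, b, c)) = true) := by
          simpa using h
        rw [if_neg hne', if_pos (show ((y == b) = true) by simpa using hy)]
        omega
      · simp only [beq_iff_eq, if_neg h, if_neg hy]
        omega

lemma not_both {A : V → V → Bool → Prop} (a b : V) (hab : a ≠ b) :
    ∀ {s t : V} {l : List (Step V)}, IsWalk A s t l → (s :: heads l).Nodup →
      ∀ c1 c2, (a, b, c1) ∈ l → (b, a, c2) ∈ l → False := by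
  intro s t l
  induction l generalizing s with
  | nil => intro _ _ c1 c2 h1 _; simp at h1
  | cons e l ih =>
    obtain ⟨x, y, d⟩ := e
    rintro ⟨rfl, ha, hw⟩ hnd c1 c2 h1 h2
    have hnd0 : (x :: y :: heads l).Nodup := hnd
    have hxn : x ∉ y :: heads l := (List.nodup_cons.mp hnd0).1
    have hnd' : (y :: heads l).Nodup := (List.nodup_cons.mp hnd0).2
    rcases List.mem_cons.mp h1 with e1 | e1 <;> rcases List.mem_cons.mp h2 with e2 | e2
    · simp only [Prod.mk.injEq] at e1 e2
      exact hab (e1.1.trans e2.1.symm)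
    · simp only [Prod.mk.injEq] at e1
      obtain ⟨rfl, rfl, -⟩ := e1
      exact hxn (List.mem_cons.mpr (Or.inr (List.mem_map.mpr ⟨(b, a, c2), e2, rfl⟩)))
    · simp only [Prod.mk.injEq] at e2
      obtain ⟨rfl, rfl, -⟩ := e2
      exact hxn (List.mem_cons.mpr (Or.inr (List.mem_map.mpr ⟨(a, b, c1), e1, rfl⟩)))
    · exact ih hw hnd' c1 c2 e1 e2

lemma path_count {A : V → V → Bool → Prop} {s t : V} {l : List (Step V)}
    (h : IsWalk A s t l) (hnd : (s :: heads l).Nodup) (a b : V) (hab : a ≠ b) :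
    l.count (a, b, false) + l.count (b, a, false) ≤ 1 := by
  have hheads : (heads l).Nodup := (List.nodup_cons.mp hnd).2
  have h1 : l.count (a, b, false) ≤ 1 :=
    le_trans (count_le_count_heads a b false l) (List.nodup_iff_count_le_one.mp hheads b)
  have h2 : l.count (b, a, false) ≤ 1 :=
    le_trans (count_le_count_heads b a false l) (List.nodup_iff_count_le_one.mp hheads a)
  by_cases hm : (a, b, false) ∈ l
  · have : (b, a, false) ∉ l := fun hm2 => not_both a b hab h hnd false false hm hm2
    rw [List.count_eq_zero.mpr this]
    omega
  · rw [List.count_eq_zero.mpr hm]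
    omega

/-- Let `T_1, …, T_k` be the negative trees of the forest `F`, `J ⊆ {1,…,k}`,
`i ∈ J` and `u, v ∈ V(T_i)`.  If `P1` is a path from `s` to `u` in `D_∅`, `P2` is the path
from `u` to `v` inside `A(T_i)`, and `P3` is a path from `v` to `t` in `D_{J∖{i}}`, then the
concatenation `P1 ++ P2 ++ P3` is a special-simple walk from `s` to `t`. -/
theorem statement_17 {V : Type} [Fintype V] [DecidableEq V] (D : WDigraph V)
    (hloop : ∀ v, ¬ D.Adj v v) (hforest : D.F.IsAcyclic)
    (k : ℕ) (t₀ : Fin k → V)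
    (hne : ∀ i, ∃ y, D.F.Adj (t₀ i) y)
    (hdisj : ∀ i j, i ≠ j → ¬ D.F.Reachable (t₀ i) (t₀ j))
    (hall : ∀ x y, D.F.Adj x y → ∃ i, D.F.Reachable (t₀ i) x)
    (J : Finset (Fin k)) (i : Fin k) (hi : i ∈ J)
    (s t u v : V)
    (hu : D.F.Reachable (t₀ i) u) (hv : D.F.Reachable (t₀ i) v)
    (P1 P2 P3 : List (Step V))
    (h1 : IsPath (D.arcsMinus (remJ D t₀ (∅ : Finset (Fin k)))) s u P1)
    (h2 : IsWalk (fun x y b => b = false ∧ D.F.Adj x y ∧ D.F.Reachable (t₀ i) x) u v P2)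
    (h2p : (u :: heads P2).Nodup)
    (h3 : IsPath (D.arcsMinus (remJ D t₀ (J.erase i))) v t P3) :
    IsWalk D.ImpArc s t (P1 ++ P2 ++ P3) ∧ D.SpecialSimple (P1 ++ P2 ++ P3) := by
  have m1 : ∀ x y b, D.arcsMinus (remJ D t₀ (∅ : Finset (Fin k))) x y b → D.ImpArc x y b :=
    fun x y b h => h.1
  have m3 : ∀ x y b, D.arcsMinus (remJ D t₀ (J.erase i)) x y b → D.ImpArc x y b :=
    fun x y b h => h.1
  have m2 : ∀ x y b, (b = false ∧ D.F.Adj x y ∧ D.F.Reachable (t₀ i) x) → D.ImpArc x y b := by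
    rintro x y b ⟨rfl, hadj, -⟩
    have : D.Adj x y := hadj.2.1
    simpa [WDigraph.ImpArc] using this
  constructor
  · exact isWalk_append (isWalk_append (isWalk_mono m1 _ _ _ h1.1) (isWalk_mono m2 _ _ _ h2))
      (isWalk_mono m3 _ _ _ h3.1)
  · intro a b hsp
    have hab : a ≠ b := by
      rintro rfl; exact hloop a hsp.1
    have hF : D.F.Adj a b := ⟨hab, hsp⟩
    obtain ⟨j, hj⟩ := hall a b hF
    have hjb : D.F.Reachable (t₀ j) b := hj.trans hF.reachable
    -- counts in P1 are zero
    have c1ab : P1.count (a, b, false) = 0 := by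
      rw [List.count_eq_zero]
      intro hm
      have := (isWalk_mem h1.1 _ hm).2
      exact this ⟨rfl, hF, j, by simp, hj⟩
    have c1ba : P1.count (b, a, false) = 0 := by
      rw [List.count_eq_zero]
      intro hm
      have := (isWalk_mem h1.1 _ hm).2
      exact this ⟨rfl, hF.symm, j, by simp, hjb⟩
    simp only [List.count_append]
    by_cases hti : D.F.Reachable (t₀ i) a
    · -- arc is in tree i: absent from P3, at most once in P2
      have htib : D.F.Reachable (t₀ i) b := hti.trans hF.reachable
      have c3ab : P3.count (a, b, false) = 0 := by
        rw [List.count_eq_zero]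
        intro hm
        have := (isWalk_mem h3.1 _ hm).2
        exact this ⟨rfl, hF, i, Finset.notMem_erase i J, hti⟩
      have c3ba : P3.count (b, a, false) = 0 := by
        rw [List.count_eq_zero]
        intro hm
        have := (isWalk_mem h3.1 _ hm).2
        exact this ⟨rfl, hF.symm, i, Finset.notMem_erase i J, htib⟩
      have hc2 := path_count h2 h2p a b hab
      omega
    · -- arc not in tree i: absent from P2, at most once in P3
      have htib : ¬ D.F.Reachable (t₀ i) b := fun h => hti (h.trans hF.symm.reachable)
      have c2ab : P2.count (a, b, false) = 0 := by
        rw [List.count_eq_zero]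
        intro hm
        exact hti (isWalk_mem h2 _ hm).2.2
      have c2ba : P2.count (b, a, false) = 0 := by
        rw [List.count_eq_zero]
        intro hm
        exact htib (isWalk_mem h2 _ hm).2.2
      have hc3 := path_count h3.1 h3.2 a b hab
      omega

end NearlyConservativePaper
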